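/- The per-chunk FastLSU iteration computes the chunk-level index: for a chunk C_i of size m_i inside a total problem of size m, the sequence defined by s_0 = m_i and s_{k+1} = #{p ∈ C_i : p < (s_k + m − m_i)·α/m} is nonincreasing, stabilizes after at most m_i steps, and its stabilized value equals r*_{C_i} = max{r ∈ {1,…,m_i} : p_(r:C_i) < (r + m − m_i)·α/m} (0 if no such r exists). -/

import Mathlib

open scoped Classical

/-- `#S(t)`: the number of elements of the multiset `C` that are strictly less than `t`. -/
noncomputable def countBelow (C : Multiset ℝ) (t : ℝ) : ℕ :=
  (C.filter (fun p => p < t)).card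

/-- The `k`-th smallest element (1-indexed order statistic, with multiplicity) of `D`. -/
noncomputable def orderStat (D : Multiset ℝ) (k : ℕ) : ℝ :=
  (D.sort (· ≤ ·)).getD (k - 1) 0

/-- The Benjamini–Hochberg index at level `α`:
`max {i ∈ {1,…,m} : p_(i) < i·α/m}`, with value `0` if this set is empty. -/
noncomputable def rBH (α : ℝ) (C : Multiset ℝ) : ℕ :=
  ((Finset.Icc 1 C.card).filter
    (fun i => orderStat C i < (i : ℝ) * α / (C.card : ℝ))).sup id

/-- The chunk-level BH index of the chunk `D` inside a total problem of `m` p-values: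
`max {r ∈ {1,…,|D|} : p_(r:D) < (r + m − |D|)·α/m}`, with value `0` if this set is empty. -/
noncomputable def rStarChunk (α : ℝ) (m : ℕ) (D : Multiset ℝ) : ℕ :=
  ((Finset.Icc 1 D.card).filter
    (fun r => orderStat D r < ((r + m - D.card : ℕ) : ℝ) * α / (m : ℝ))).sup id

/-!
The update `f n = #{p ∈ Cᵢ : p < (n + m − mᵢ)·α/m}` is monotone in `n` and bounded by `mᵢ`, so
the iterates `s k = f^[k] mᵢ` decrease and must stall within `mᵢ` steps. A stall is a fixed
point, and every `r ≤ mᵢ` with `r ≤ f r` stays below all iterates, so the fixed point is the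
largest such `r`. For sorted data, `r ≤ #{p < t}` iff `p_(r) < t`, which turns `r ≤ f r` into
the condition defining `r*`.
-/

open Finset

theorem List.Pairwise.lt_countP_lt_iff {α : Type*} [LinearOrder α] {L : List α}
    (hL : L.Pairwise (· ≤ ·)) {i : ℕ} (hi : i < L.length) (t : α) :
    i < L.countP (· < t) ↔ L[i] < t := by
  have hsplit : L = L.take i ++ L[i] :: L.drop (i + 1) := by
    rw [← List.drop_eq_getElem_cons, List.take_append_drop]
  have hcount : L.countP (· < t) = (L.take i).countP (· < t) + (if L[i] < t then 1 else 0)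
      + (L.drop (i + 1)).countP (· < t) := by
    conv_lhs => rw [hsplit]
    simp only [List.countP_append, List.countP_cons, decide_eq_true_eq]
    omega
  have hlen : (L.take i).length = i := List.length_take_of_le hi.le
  rw [hsplit] at hL
  obtain ⟨-, hcons, hcross⟩ := List.pairwise_append.1 hL
  constructor
  · intro hlt
    by_contra! hge
    have hafter : (L.drop (i + 1)).countP (· < t) = 0 :=
      List.countP_eq_zero.2 fun b hb => by
        simpa using hge.trans ((List.pairwise_cons.1 hcons).1 b hb)
    have := (L.take i).countP_le_length (p := (· < t))
    simp only [if_neg hge.not_gt] at hcount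
    omega
  · intro hlt
    have hbefore : (L.take i).countP (· < t) = i :=
      (List.countP_eq_length.2 fun a ha => by
        simpa using (hcross a ha _ List.mem_cons_self).trans_lt hlt).trans hlen
    simp only [if_pos hlt] at hcount
    omega

theorem countBelow_eq_countP_sort (C : Multiset ℝ) (t : ℝ) :
    countBelow C t = (C.sort (· ≤ ·)).countP (· < t) := by
  conv_lhs => rw [countBelow, ← Multiset.sort_eq C (· ≤ ·)]
  rw [Multiset.filter_coe, Multiset.coe_card, List.countP_eq_length_filter]

theorem le_countBelow_iff {C : Multiset ℝ} {r : ℕ} (hr0 : 1 ≤ r) (hrC : r ≤ C.card) (t : ℝ) :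
    r ≤ countBelow C t ↔ orderStat C r < t := by
  have hr : r - 1 < (C.sort (· ≤ ·)).length := by rw [Multiset.length_sort]; omega
  rw [orderStat, List.getD_eq_getElem _ _ hr, countBelow_eq_countP_sort,
    ← (Multiset.pairwise_sort C _).lt_countP_lt_iff hr]
  omega

theorem countBelow_mono (C : Multiset ℝ) : Monotone (countBelow C) := fun _ _ h =>
  Multiset.card_le_card (Multiset.monotone_filter_right C fun _ hx => hx.trans_le h)

theorem countBelow_le_card (C : Multiset ℝ) (t : ℝ) : countBelow C t ≤ C.card :=
  Multiset.card_le_card (Multiset.filter_le _ C)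

theorem Antitone.exists_apply_eq_apply_succ {s : ℕ → ℕ} (hs : Antitone s) :
    ∃ k ≤ s 0, s k = s (k + 1) := by
  by_contra! hstrict
  have hdescent : ∀ k ≤ s 0 + 1, s k + k ≤ s 0 := by
    intro k hk
    induction k with
    | zero => simp
    | succ k ih =>
      have : s (k + 1) ≤ s k := hs k.le_succ
      have := hstrict k (by omega)
      have := ih (by omega)
      omega
  have := hdescent (s 0 + 1) le_rfl
  omega

theorem Monotone.le_iterate_of_le_map {α : Type*} [Preorder α] {f : α → α} (hf : Monotone f)
    {r x : α} (hr : r ≤ f r) (hrx : r ≤ x) (n : ℕ) : r ≤ f^[n] x :=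
  (hf.monotone_iterate_of_le_map hr (Nat.zero_le n)).trans (hf.iterate n hrx)

theorem Finset.sup_filter_Icc_one_eq {P : ℕ → Prop} [DecidablePred P] {N x : ℕ} (hxN : x ≤ N)
    (hx : 1 ≤ x → P x) (hmax : ∀ r ∈ Icc 1 N, P r → r ≤ x) :
    ((Icc 1 N).filter P).sup id = x := by
  refine le_antisymm (Finset.sup_le fun r hr => hmax r (mem_filter.1 hr).1 (mem_filter.1 hr).2) ?_
  rcases Nat.eq_zero_or_pos x with rfl | hpos
  · exact Nat.zero_le _
  · exact le_sup (f := id) (mem_filter.2 ⟨mem_Icc.2 ⟨hpos, hxN⟩, hx hpos⟩)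

theorem Monotone.iterate_eq_sup_of_isFixedPt {f : ℕ → ℕ} (hf : Monotone f) {N : ℕ}
    (hN : f N ≤ N) {k : ℕ} (hk : Function.IsFixedPt f (f^[k] N)) :
    f^[k] N = ((Icc 1 N).filter fun r => r ≤ f r).sup id := by
  have hkN : f^[k] N ≤ N := hf.antitone_iterate_of_map_le hN (Nat.zero_le k)
  refine (Finset.sup_filter_Icc_one_eq hkN (fun _ => hk.ge) fun r hr hrf => ?_).symm
  exact hf.le_iterate_of_le_map hrf (mem_Icc.1 hr).2 k

theorem chunk_fastLSU_computes_rStar_general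
    (α : ℝ) (hα0 : 0 < α)
    (m mi : ℕ)
    (Ci : Multiset ℝ) (hcard : Ci.card = mi)
    (s : ℕ → ℕ) (hs0 : s 0 = mi)
    (hs : ∀ k, s (k + 1) = countBelow Ci (((s k + m - mi : ℕ) : ℝ) * α / (m : ℝ))) :
    (∀ k, s (k + 1) ≤ s k) ∧
    (∃ k ≤ mi, s k = s (k + 1)) ∧
    (∀ k, s k = s (k + 1) → s k = rStarChunk α m Ci) := by
  set f : ℕ → ℕ := fun n => countBelow Ci (((n + m - mi : ℕ) : ℝ) * α / m)
  have hf : Monotone f := fun a b hab => countBelow_mono Ci (by gcongr)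
  have hN : f mi ≤ mi := hcard ▸ countBelow_le_card Ci _
  have hs_iterate : s = fun k => f^[k] mi := by
    funext k
    induction k with
    | zero => exact hs0
    | succ k ih => rw [hs, ih, Function.iterate_succ_apply']
  have hrStar : rStarChunk α m Ci = ((Icc 1 mi).filter fun r => r ≤ f r).sup id := by
    rw [rStarChunk, hcard]
    congr 1
    refine filter_congr fun r hr => ?_
    obtain ⟨hr1, hrmi⟩ := mem_Icc.1 hr
    exact (le_countBelow_iff hr1 (hcard ▸ hrmi) _).symm
  have hanti := hf.antitone_iterate_of_map_le hN
  subst hs_iterate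
  refine ⟨fun k => hanti k.le_succ, hanti.exists_apply_eq_apply_succ, fun k hk => ?_⟩
  rw [hrStar]
  exact hf.iterate_eq_sup_of_isFixedPt hN ((Function.iterate_succ_apply' f k mi).symm.trans hk.symm)

/-- The per-chunk FastLSU iteration computes the chunk-level index: for a
chunk `Ci` of size `mi` inside a total problem of size `m`, the sequence defined by
`s 0 = mi` and `s (k+1) = #{p ∈ Ci : p < (s k + m − mi)·α/m}` is nonincreasing,
stabilizes after at most `mi` steps, and its stabilized value equals `r*_{C_i}`. -/
theorem chunk_fastLSU_computes_rStar
    (α : ℝ) (hα0 : 0 < α) (hα1 : α < 1)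
    (m mi : ℕ) (hmi1 : 1 ≤ mi) (hmim : mi ≤ m)
    (Ci : Multiset ℝ) (hcard : Ci.card = mi)
    (hvals : ∀ p ∈ Ci, 0 ≤ p ∧ p ≤ 1)
    (s : ℕ → ℕ) (hs0 : s 0 = mi)
    (hs : ∀ k, s (k + 1) = countBelow Ci (((s k + m - mi : ℕ) : ℝ) * α / (m : ℝ))) :
    (∀ k, s (k + 1) ≤ s k) ∧
    (∃ k ≤ mi, s k = s (k + 1)) ∧
    (∀ k, s k = s (k + 1) → s k = rStarChunk α m Ci) :=
  chunk_fastLSU_computes_rStar_general α hα0 m mi Ci hcard s hs0 hs
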